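/- arXiv:1608.02242 — 2 statements merged into one kernel-verified Lean document; each statement's English description precedes it below -/
import Mathlib

section
/- Suppose there exist nondecreasing functions ρ₋, ρ₊ : [0,∞) → ℝ with ρ₋(t) → ∞ as t → ∞, a sequence of nonnegative reals R_i with R_i → ∞, and kernels K_i : X_i × X_i → ℝ satisfying, for every i: K_i(x,x) = 0 and K_i(x,y) = K_i(y,x) for all x, y ∈ X_i; ρ₋(d_i(x,y)) ≤ K_i(x,y) ≤ ρ₊(d_i(x,y)) for all x, y ∈ X_i; and for every finite subset {x_1, …, x_n} ⊆ X_i of diameter at most R_i and all real numbers λ_1, …, λ_n with Σ_k λ_k = 0, one has Σ_{k,l} λ_k λ_l K_i(x_k, x_l) ≤ 0. Then Γ is a-T-menable: there exists a function ψ : Γ → ℝ such that ψ(1) = 0; ψ(g) = ψ(g⁻¹) for all g ∈ Γ; for all g_1, …, g_n ∈ Γ and all real numbers λ_1, …, λ_n with Σ_k λ_k = 0, Σ_{k,l} λ_k λ_l ψ(g_k⁻¹ g_l) ≤ 0; and for every C ∈ ℝ the set {g ∈ Γ : ψ(g) ≤ C} is finite. -/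
open scoped BigOperators symmDiff Classical

universe u v

/-- A sofic approximation of a group `Γ` generated by a finite symmetric set `S`. -/
structure SoficApprox (Γ : Type u) [Group Γ] (S : Finset Γ) where
  F : ℕ → Finset Γ
  F_mono : Monotone F
  F_one : ∀ i, (1 : Γ) ∈ F i
  F_exhausts : ∀ g : Γ, ∃ i, g ∈ F i
  eps : ℕ → ℝ
  eps_pos : ∀ i, 0 < eps i
  eps_lim : Filter.Tendsto eps Filter.atTop (nhds 0)
  X : ℕ → Type
  finX : ∀ i, Finite (X i)
  neX : ∀ i, Nonempty (X i)
  sigma : (i : ℕ) → Γ → Equiv.Perm (X i)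
  Y : (i : ℕ) → Set (X i)
  Y_large : ∀ i, (1 - eps i) * (Nat.card (X i) : ℝ) ≤ ((Y i).ncard : ℝ)
  sigma_mul : ∀ i, ∀ g ∈ F i, ∀ h ∈ F i, ∀ y ∈ Y i, sigma i g (sigma i h y) = sigma i (g * h) y
  sigma_free : ∀ i, ∀ g ∈ F i, g ≠ 1 → ∀ y ∈ Y i, sigma i g y ≠ y

namespace SoficApprox

variable {Γ : Type u} [Group Γ] {S : Finset Γ}

/-- The total space (space of graphs) `X = ⨆ i, X i`. -/
abbrev Total (A : SoficApprox Γ S) : Type := Σ i, A.X i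

/-- The bijection `σ(g)` of the total space acting as `σ_i(g)` on each `X i`. -/
def perm (A : SoficApprox Γ S) (g : Γ) : Equiv.Perm A.Total :=
  Equiv.sigmaCongrRight fun i => A.sigma i g

/-- The continuous extension `σ̄(g)` of `σ(g)` to the Stone–Čech compactification. -/
def permBar (A : SoficApprox Γ S) (g : Γ) : Ultrafilter A.Total → Ultrafilter A.Total :=
  Ultrafilter.map (A.perm g)

/-- The union `Y = ⨆ i, Y i` inside the total space. -/
def Ytot (A : SoficApprox Γ S) : Set A.Total := {p | p.2 ∈ A.Y p.1}

/-- `∂Y`: free ultrafilters containing `Y`. -/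
def bdY (A : SoficApprox Γ S) : Set (Ultrafilter A.Total) :=
  {η | (∀ p : A.Total, η ≠ pure p) ∧ A.Ytot ∈ η}

/-- The core `Z = ⋂_{g ∈ Γ} σ̄(g)''(∂Y)` of the sofic boundary. -/
def core (A : SoficApprox Γ S) : Set (Ultrafilter A.Total) :=
  ⋂ g : Γ, A.permBar g '' A.bdY

/-- The `S`-labelled graph structure on `X i`, with edges `{x, σ_i(s)(x)}` for `s ∈ S`. -/
def graph (A : SoficApprox Γ S) (i : ℕ) : SimpleGraph (A.X i) where
  Adj x y := x ≠ y ∧ ∃ s ∈ S, A.sigma i s x = y ∨ A.sigma i s y = x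
  symm := ⟨fun x y h => ⟨h.1.symm, by obtain ⟨s, hs, h'⟩ := h.2; exact ⟨s, hs, h'.symm⟩⟩⟩
  loopless := ⟨fun x h => h.1 rfl⟩

/-- An admissible metric on the total space: a metric restricting to the edge-path
metric on each `X i` and with distances between distinct components tending to `∞`. -/
def Admissible (A : SoficApprox Γ S) (d : A.Total → A.Total → ℝ) : Prop :=
  (∀ p q, d p q = d q p) ∧
  (∀ p q r, d p r ≤ d p q + d q r) ∧
  (∀ p q, d p q = 0 ↔ p = q) ∧
  (∀ p q, 0 ≤ d p q) ∧
  (∀ (i : ℕ) (x y : A.X i), d ⟨i, x⟩ ⟨i, y⟩ = ((A.graph i).dist x y : ℝ)) ∧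
  (∀ R : ℝ, ∃ N : ℕ, ∀ i j : ℕ, i ≠ j → N ≤ i + j →
      ∀ (x : A.X i) (y : A.X j), R < d ⟨i, x⟩ ⟨j, y⟩)

/-- The entourage `E_R` viewed inside `βX × βX`. -/
def ER (A : SoficApprox Γ S) (d : A.Total → A.Total → ℝ) (R : ℝ) :
    Set (Ultrafilter A.Total × Ultrafilter A.Total) :=
  {p | ∃ a b : A.Total, d a b ≤ R ∧ p = (pure a, pure b)}

end SoficApprox

/-- Word length of `g` with respect to the generating set `S`. -/
noncomputable def wordLength {Γ : Type u} [Group Γ] (S : Finset Γ) (g : Γ) : ℕ :=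
  sInf {n | ∃ l : List Γ, (∀ x ∈ l, x ∈ S) ∧ l.length = n ∧ l.prod = g}

/-- Word length of an element of a free group. -/
noncomputable def fgLength {α : Type v} (w : FreeGroup α) : ℕ :=
  sInf {n | ∃ l : List (α × Bool), l.length = n ∧ FreeGroup.mk l = w}

/-- The canonical homomorphism `F_S → Γ` extending the inclusion `S ↪ Γ`. -/
noncomputable def pihom {Γ : Type u} [Group Γ] (S : Finset Γ) : FreeGroup ↥S →* Γ :=
  FreeGroup.lift fun s => (s : Γ)

/-- The homomorphism `τ : F_S → Sym(X)` with `τ(s) = σ(s)` for `s ∈ S`. -/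
noncomputable def SoficApprox.tau {Γ : Type u} [Group Γ] {S : Finset Γ}
    (A : SoficApprox Γ S) : FreeGroup ↥S →* Equiv.Perm A.Total :=
  FreeGroup.lift fun s => A.perm (s : Γ)

/-!
Average the kernels along orbits, `ψ_i(g) = 𝔼_{y ∈ Y_i} K_i(σ_i(g) y, σ_i(1) y)`
(`A.avgKernel K i g 1`), and let `ψ₀` be a limit of the `ψ_i` along a non-principal
ultrafilter. Once `F_i` contains a large word ball, the orbit map `g ↦ σ_i(g) y` of a point
`y ∈ Y_i` moves along edges of the graph, so `d_i(σ_i(g) y, y) ≤ |g|`; conversely a path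
from `y` to `σ_i(g) y` spells a word `b` with `σ_i(b) y = σ_i(g) y`, and freeness forces
`b = g`. Hence `ρ₋(|g|) ≤ ψ₀(g) ≤ ρ₊(|g|)`, which gives properness. As `σ_i(a)` permutes
`X_i` and `Y_i` fills all but an `ε_i`-fraction of `X_i`, substituting `y ↦ σ_i(g_l⁻¹) y`
changes the averages by `O(ε_i)`; this turns `∑ λ_k λ_l ψ_i(g_k⁻¹ g_l)` into an average of
sums `∑ λ_k λ_l K_i(x_k, x_l)` over configurations of bounded diameter, which are `≤ 0`.
Finally `ψ(g) = ψ₀(g) + ψ₀(g⁻¹)` is symmetric.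
-/

open Filter Topology Finset
open scoped Pointwise

section WordBall

variable {Γ : Type*} [Group Γ] {S : Finset Γ} {a b s : Γ} {m n : ℕ}

noncomputable def wordBall (S : Finset Γ) (n : ℕ) : Finset Γ := insert 1 S ^ n

lemma one_mem_wordBall : (1 : Γ) ∈ wordBall S n := one_mem_pow (mem_insert_self 1 S)

lemma wordBall_mono (h : m ≤ n) : wordBall S m ⊆ wordBall S n :=
  pow_subset_pow_right (mem_insert_self 1 S) h

lemma mem_wordBall_one_of_mem (hs : s ∈ S) : s ∈ wordBall S 1 := by
  simp [wordBall, hs]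

lemma mem_wordBall_succ :
    a ∈ wordBall S (n + 1) ↔ ∃ t ∈ insert 1 S, ∃ b ∈ wordBall S n, t * b = a := by
  rw [wordBall, pow_succ', Finset.mem_mul, wordBall]

lemma mul_mem_wordBall (ha : a ∈ wordBall S m) (hb : b ∈ wordBall S n) :
    a * b ∈ wordBall S (m + n) := by
  rw [wordBall, pow_add]
  exact mul_mem_mul ha hb

lemma inv_mem_wordBall (hS : ∀ s ∈ S, s⁻¹ ∈ S) (ha : a ∈ wordBall S n) :
    a⁻¹ ∈ wordBall S n := by
  have hinv : (insert 1 S)⁻¹ = insert 1 S := by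
    ext x
    rw [mem_inv', mem_insert, mem_insert, inv_eq_one]
    exact or_congr_right ⟨fun h => inv_inv x ▸ hS _ h, hS x⟩
  rw [wordBall, ← hinv, inv_pow]
  exact inv_mem_inv ha

lemma exists_mem_wordBall (hS : ∀ s ∈ S, s⁻¹ ∈ S)
    (hgen : Subgroup.closure (S : Set Γ) = ⊤) (g : Γ) : ∃ n, g ∈ wordBall S n := by
  have hg : g ∈ Subgroup.closure (S : Set Γ) := hgen ▸ Subgroup.mem_top g
  induction hg using Subgroup.closure_induction with
  | mem x hx => exact ⟨1, mem_wordBall_one_of_mem hx⟩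
  | one => exact ⟨0, one_mem_wordBall⟩
  | mul x y _ _ hx hy =>
    obtain ⟨m, hx⟩ := hx
    obtain ⟨n, hy⟩ := hy
    exact ⟨m + n, mul_mem_wordBall hx hy⟩
  | inv x _ hx =>
    obtain ⟨n, hx⟩ := hx
    exact ⟨n, inv_mem_wordBall hS hx⟩

lemma exists_forall_mem_wordBall {ι : Type*} [Fintype ι] (hS : ∀ s ∈ S, s⁻¹ ∈ S)
    (hgen : Subgroup.closure (S : Set Γ) = ⊤) (g : ι → Γ) :
    ∃ N, ∀ k, g k ∈ wordBall S N := by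
  choose n hn using fun k => exists_mem_wordBall hS hgen (g k)
  exact ⟨univ.sup n, fun k => wordBall_mono (le_sup (mem_univ k)) (hn k)⟩

lemma finite_setOf_le_of_forall_notMem_wordBall {ψ : Γ → ℝ} {ρ : ℕ → ℝ}
    (hρ : Tendsto ρ atTop atTop) (hψ : ∀ m g, g ∉ wordBall S m → ρ m ≤ ψ g) (C : ℝ) :
    {g | ψ g ≤ C}.Finite := by
  obtain ⟨m, hm⟩ := (hρ.eventually_gt_atTop C).exists
  refine (wordBall S m).finite_toSet.subset fun g hg => ?_
  by_contra hgm
  exact (hm.trans_le (hψ m g hgm)).not_ge hg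

end WordBall

section CondNegDef

variable {Γ : Type*} [Group Γ]

def IsCondNegDef (ψ : Γ → ℝ) : Prop :=
  ∀ (n : ℕ) (g : Fin n → Γ) (lam : Fin n → ℝ),
    ∑ k, lam k = 0 → ∑ k, ∑ l, lam k * lam l * ψ ((g k)⁻¹ * g l) ≤ 0

lemma IsCondNegDef.add_comp_inv {ψ : Γ → ℝ} (hψ : IsCondNegDef ψ) :
    IsCondNegDef fun g => ψ g + ψ g⁻¹ := by
  intro n g lam hlam
  have hswap : ∑ k, ∑ l, lam k * lam l * ψ ((g k)⁻¹ * g l)⁻¹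
      = ∑ k, ∑ l, lam k * lam l * ψ ((g k)⁻¹ * g l) := by
    rw [sum_comm]
    simp only [mul_inv_rev, inv_inv, mul_comm (lam _) (lam _)]
  simp only [mul_add, sum_add_distrib, hswap]
  linarith [hψ n g lam hlam]

end CondNegDef

lemma abs_sum_comp_perm_sub_sum_le {α : Type*} [Finite α] (e : α ≃ α) (s : Finset α) (f : α → ℝ)
    {B : ℝ} (hB : 0 ≤ B) (hf : ∀ x ∈ s, |f x| ≤ B) (hfe : ∀ x ∈ s, |f (e x)| ≤ B) :
    |∑ x ∈ s, f (e x) - ∑ x ∈ s, f x| ≤ 2 * B * (Nat.card α - #s) := by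
  have := Fintype.ofFinite α
  set t := s.map e.toEmbedding
  have hsum_le : ∀ u : Finset α, (∀ x ∈ u, |f x| ≤ B) → |∑ x ∈ u, f x| ≤ #u * B := fun u hu =>
    (abs_sum_le_sum_abs _ _).trans (by simpa using sum_le_card_nsmul u _ B hu)
  have hft : ∀ x ∈ t \ s, |f x| ≤ B := fun x hx => by
    obtain ⟨y, hy, rfl⟩ := mem_map.1 (Finset.mem_sdiff.1 hx).1
    exact hfe y hy
  have hts : (#(t \ s) : ℝ) ≤ Nat.card α - #s := by
    rw [Nat.card_eq_fintype_card, ← Nat.cast_sub (card_le_univ s), ← card_compl]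
    exact_mod_cast card_le_card fun x hx => mem_compl.2 (Finset.mem_sdiff.1 hx).2
  have hst : #(s \ t) = #(t \ s) := card_sdiff_comm (card_map _).symm
  have hmap : ∑ x ∈ s, f (e x) = ∑ x ∈ t, f x := (sum_map s e.toEmbedding f).symm
  rw [hmap, ← sum_sdiff_sub_sum_sdiff]
  calc |∑ x ∈ t \ s, f x - ∑ x ∈ s \ t, f x|
      ≤ |∑ x ∈ t \ s, f x| + |∑ x ∈ s \ t, f x| := abs_sub _ _
    _ ≤ #(t \ s) * B + #(s \ t) * B :=
      add_le_add (hsum_le _ hft) (hsum_le _ fun x hx => hf x (Finset.mem_sdiff.1 hx).1)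
    _ ≤ 2 * B * (Nat.card α - #s) := by
      rw [hst]
      nlinarith

section Kernel

variable {V : Type*} {G : SimpleGraph V} {κ : V → V → ℝ} {ρminus ρplus : ℝ → ℝ}

lemma kernel_mem_Icc_of_dist_le (hmonoLo : Monotone ρminus) (hmonoHi : Monotone ρplus)
    (hctrl : ∀ x y, ρminus (G.dist x y) ≤ κ x y ∧ κ x y ≤ ρplus (G.dist x y))
    {x y : V} {k : ℕ} (hd : G.dist x y ≤ k) : κ x y ∈ Set.Icc (ρminus 0) (ρplus k) :=
  ⟨(hmonoLo (Nat.cast_nonneg _)).trans (hctrl x y).1,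
    (hctrl x y).2.trans (hmonoHi (by exact_mod_cast hd))⟩

lemma abs_kernel_le_of_dist_le (hmonoLo : Monotone ρminus) (hmonoHi : Monotone ρplus)
    (hctrl : ∀ x y, ρminus (G.dist x y) ≤ κ x y ∧ κ x y ≤ ρplus (G.dist x y))
    {x y : V} {k : ℕ} (hd : G.dist x y ≤ k) : |κ x y| ≤ max |ρminus 0| |ρplus k| :=
  have h := kernel_mem_Icc_of_dist_le hmonoLo hmonoHi hctrl hd
  abs_le_max_abs_abs h.1 h.2

end Kernel

namespace SoficApprox

variable {Γ : Type u} [Group Γ] {S : Finset Γ} (A : SoficApprox Γ S) {i : ℕ}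

instance (i : ℕ) : Finite (A.X i) := A.finX i

lemma sigma_one_apply {y : A.X i} (hy : y ∈ A.Y i) : A.sigma i 1 y = y :=
  (A.sigma i 1).injective (by rw [A.sigma_mul i 1 (A.F_one i) 1 (A.F_one i) y hy, one_mul])

lemma eq_of_sigma_apply_eq {y : A.X i} (hy : y ∈ A.Y i) {g b : Γ} (hg : g ∈ A.F i)
    (hg' : g⁻¹ ∈ A.F i) (hb : b ∈ A.F i) (hgb : g⁻¹ * b ∈ A.F i)
    (h : A.sigma i g y = A.sigma i b y) : g = b := by
  by_contra hne
  refine A.sigma_free i _ hgb (by rwa [ne_eq, inv_mul_eq_one]) y hy ?_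
  rw [← A.sigma_mul i _ hg' _ hb y hy, ← h, A.sigma_mul i _ hg' _ hg y hy, inv_mul_cancel,
    A.sigma_one_apply hy]

lemma eventually_wordBall_subset (n : ℕ) : ∀ᶠ i in atTop, wordBall S n ⊆ A.F i := by
  have hmem : ∀ g ∈ wordBall S n, ∀ᶠ i in atTop, g ∈ A.F i := fun g _ => by
    obtain ⟨i₀, hi₀⟩ := A.F_exhausts g
    exact eventually_atTop.2 ⟨i₀, fun i hi => A.F_mono hi hi₀⟩
  exact ((eventually_all_finset _).2 hmem).mono fun i hi g hg => hi g hg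

lemma dist_sigma_apply_le_one {s : Γ} (hs : s ∈ S) (x : A.X i) :
    (A.graph i).dist (A.sigma i s x) x ≤ 1 := by
  by_cases h : A.sigma i s x = x
  · simp [h]
  · have hadj : (A.graph i).Adj (A.sigma i s x) x := ⟨h, s, hs, Or.inr rfl⟩
    exact (SimpleGraph.dist_eq_one_iff_adj.2 hadj).le

lemma dist_sigma_mul_apply_le (hconn : (A.graph i).Connected) {y : A.X i} (hy : y ∈ A.Y i)
    {a c : Γ} {j k : ℕ} (ha : a ∈ wordBall S j) (hc : c ∈ wordBall S k)
    (hF : wordBall S (k + j) ⊆ A.F i) :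
    (A.graph i).dist (A.sigma i (c * a) y) (A.sigma i a y) ≤ k := by
  induction k generalizing c with
  | zero =>
    rw [wordBall, pow_zero, Finset.mem_one] at hc
    simp [hc]
  | succ k ih =>
    obtain ⟨t, ht, c, hc', rfl⟩ := mem_wordBall_succ.1 hc
    have ih := ih hc' ((wordBall_mono (by omega)).trans hF)
    rcases mem_insert.1 ht with rfl | ht
    · rw [one_mul]
      omega
    · have hstep : A.sigma i (t * c * a) y = A.sigma i t (A.sigma i (c * a) y) := by
        rw [mul_assoc, A.sigma_mul i t (hF (wordBall_mono (by omega) (mem_wordBall_one_of_mem ht)))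
          _ (hF (wordBall_mono (by omega) (mul_mem_wordBall hc' ha))) y hy]
      calc (A.graph i).dist (A.sigma i (t * c * a) y) (A.sigma i a y)
          ≤ (A.graph i).dist (A.sigma i (t * c * a) y) (A.sigma i (c * a) y)
            + (A.graph i).dist (A.sigma i (c * a) y) (A.sigma i a y) := hconn.dist_triangle
        _ ≤ 1 + k := by
          gcongr
          rw [hstep]
          exact A.dist_sigma_apply_le_one ht _
        _ = k + 1 := add_comm 1 k

lemma exists_mem_wordBall_of_walk (hS : ∀ s ∈ S, s⁻¹ ∈ S) {y : A.X i} (hy : y ∈ A.Y i)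
    {u x : A.X i} (p : (A.graph i).Walk u x) {a : Γ} {j : ℕ} (ha : a ∈ wordBall S j)
    (hu : u = A.sigma i a y) (hF : wordBall S (p.length + j) ⊆ A.F i) :
    ∃ b ∈ wordBall S p.length, x = A.sigma i (b * a) y := by
  induction p generalizing a j with
  | nil => exact ⟨1, one_mem_wordBall, by rw [one_mul, hu]⟩
  | @cons u v x hadj p ih =>
    rw [SimpleGraph.Walk.length_cons] at hF
    have hF' : wordBall S (1 + j) ⊆ A.F i := (wordBall_mono (by omega)).trans hF
    have haF : a ∈ A.F i := hF' (wordBall_mono (by omega) ha)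
    obtain ⟨-, s, hs, hsv⟩ := hadj
    obtain ⟨t, ht, hv⟩ : ∃ t ∈ S, v = A.sigma i (t * a) y := by
      rcases hsv with h | h
      · exact ⟨s, hs, by rw [← h, hu, A.sigma_mul i s
          (hF' (wordBall_mono (by omega) (mem_wordBall_one_of_mem hs))) a haF y hy]⟩
      · refine ⟨s⁻¹, hS s hs, (A.sigma i s).injective ?_⟩
        rw [h, hu, A.sigma_mul i s (hF' (wordBall_mono (by omega) (mem_wordBall_one_of_mem hs))) _
          (hF' (mul_mem_wordBall (mem_wordBall_one_of_mem (hS s hs)) ha)) y hy, mul_inv_cancel_left]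
    obtain ⟨b, hb, hx⟩ := ih (mul_mem_wordBall (mem_wordBall_one_of_mem ht) ha) hv
      ((wordBall_mono (by omega)).trans hF)
    exact ⟨b * t, mul_mem_wordBall hb (mem_wordBall_one_of_mem ht), by rw [hx, mul_assoc]⟩

lemma mem_wordBall_of_dist_le (hS : ∀ s ∈ S, s⁻¹ ∈ S) (hconn : (A.graph i).Connected)
    {y : A.X i} (hy : y ∈ A.Y i) {g : Γ} {m n : ℕ} (hg : g ∈ wordBall S n) (hmn : m ≤ n)
    (hF : wordBall S (n + n) ⊆ A.F i) (hd : (A.graph i).dist (A.sigma i g y) y ≤ m) :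
    g ∈ wordBall S m := by
  obtain ⟨p, hp⟩ := hconn.exists_walk_length_eq_dist y (A.sigma i g y)
  have hpm : p.length ≤ m := by rwa [hp, SimpleGraph.dist_comm]
  have hFp : wordBall S (p.length + 0) ⊆ A.F i := (wordBall_mono (by omega)).trans hF
  obtain ⟨b, hb, hgb⟩ := A.exists_mem_wordBall_of_walk hS hy p one_mem_wordBall
    (A.sigma_one_apply hy).symm hFp
  rw [mul_one] at hgb
  have hbn : b ∈ wordBall S n := wordBall_mono (hpm.trans hmn) hb
  have hFn : wordBall S n ⊆ A.F i := (wordBall_mono (by omega)).trans hF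
  have hg' := inv_mem_wordBall hS hg
  rw [A.eq_of_sigma_apply_eq hy (hFn hg) (hFn hg') (hFn hbn) (hF (mul_mem_wordBall hg' hbn)) hgb]
  exact wordBall_mono hpm hb

noncomputable def Yfin (i : ℕ) : Finset (A.X i) := (A.Y i).toFinite.toFinset

variable {A} in
lemma mem_Yfin {y : A.X i} : y ∈ A.Yfin i ↔ y ∈ A.Y i := Set.Finite.mem_toFinset _

lemma card_Yfin_eq_ncard (i : ℕ) : #(A.Yfin i) = (A.Y i).ncard :=
  (Set.ncard_eq_toFinset_card _ _).symm

lemma card_Yfin_le (i : ℕ) : (#(A.Yfin i) : ℝ) ≤ Nat.card (A.X i) := by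
  rw [card_Yfin_eq_ncard]
  exact_mod_cast Set.ncard_le_card _

lemma eventually_Yfin_nonempty : ∀ᶠ i in atTop, (A.Yfin i).Nonempty := by
  filter_upwards [A.eps_lim.eventually_lt_const one_pos] with i hi
  have hX : (1 : ℝ) ≤ Nat.card (A.X i) := by
    have := A.neX i
    exact_mod_cast Nat.card_pos
  have hY := A.Y_large i
  rw [← card_Yfin_eq_ncard] at hY
  rw [← card_pos, ← Nat.cast_pos (α := ℝ)]
  nlinarith

lemma tendsto_card_sub_card_Yfin_div :
    Tendsto (fun i => ((Nat.card (A.X i) : ℝ) - #(A.Yfin i)) / #(A.Yfin i)) atTop (𝓝 0) := by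
  have hε : Tendsto (fun i => A.eps i / (1 - A.eps i)) atTop (𝓝 0) := by
    have h := A.eps_lim.div (tendsto_const_nhds.sub A.eps_lim) (by norm_num : (1 : ℝ) - 0 ≠ 0)
    rwa [sub_zero, zero_div] at h
  refine tendsto_of_tendsto_of_tendsto_of_le_of_le' tendsto_const_nhds hε ?_ ?_
  · filter_upwards [A.eventually_Yfin_nonempty] with i hY
    exact div_nonneg (sub_nonneg.2 (A.card_Yfin_le i)) (Nat.cast_nonneg _)
  · filter_upwards [A.eps_lim.eventually_lt_const one_pos, A.eventually_Yfin_nonempty]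
      with i hε1 hY
    have hlarge := A.Y_large i
    rw [← card_Yfin_eq_ncard] at hlarge
    rw [div_le_div_iff₀ (Nat.cast_pos.2 hY.card_pos) (sub_pos.2 hε1)]
    nlinarith

noncomputable def avgKernel (K : (i : ℕ) → A.X i → A.X i → ℝ) (i : ℕ) (a b : Γ) : ℝ :=
  𝔼 y ∈ A.Yfin i, K i (A.sigma i a y) (A.sigma i b y)

variable {K : (i : ℕ) → A.X i → A.X i → ℝ} {ρminus ρplus : ℝ → ℝ}

lemma avgKernel_one_one (hdiag : ∀ x, K i x x = 0) : A.avgKernel K i 1 1 = 0 := by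
  simp [avgKernel, hdiag]

lemma avgKernel_mem_Icc (hconn : (A.graph i).Connected) (hmonoLo : Monotone ρminus)
    (hmonoHi : Monotone ρplus)
    (hctrl : ∀ x y : A.X i, ρminus ((A.graph i).dist x y) ≤ K i x y ∧
      K i x y ≤ ρplus ((A.graph i).dist x y))
    {h : Γ} {n : ℕ} (hh : h ∈ wordBall S n) (hF : wordBall S n ⊆ A.F i)
    (hY : (A.Yfin i).Nonempty) :
    A.avgKernel K i h 1 ∈ Set.Icc (ρminus 0) (ρplus n) := by
  have hmem : ∀ y ∈ A.Yfin i,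
      K i (A.sigma i h y) (A.sigma i 1 y) ∈ Set.Icc (ρminus 0) (ρplus n) := fun y hy => by
    refine kernel_mem_Icc_of_dist_le hmonoLo hmonoHi hctrl ?_
    simpa using A.dist_sigma_mul_apply_le hconn (mem_Yfin.1 hy) one_mem_wordBall hh
      (by rwa [add_zero])
  exact ⟨le_expect hY fun y hy => (hmem y hy).1, expect_le hY fun y hy => (hmem y hy).2⟩

lemma le_avgKernel_of_notMem_wordBall (hS : ∀ s ∈ S, s⁻¹ ∈ S)
    (hconn : (A.graph i).Connected) (hmonoLo : Monotone ρminus)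
    (hctrl : ∀ x y : A.X i, ρminus ((A.graph i).dist x y) ≤ K i x y ∧
      K i x y ≤ ρplus ((A.graph i).dist x y))
    {h : Γ} {m n : ℕ} (hh : h ∈ wordBall S n) (hhm : h ∉ wordBall S m)
    (hF : wordBall S (n + n) ⊆ A.F i) (hY : (A.Yfin i).Nonempty) :
    ρminus m ≤ A.avgKernel K i h 1 := by
  have hmn : m ≤ n := by
    by_contra hnm
    exact hhm (wordBall_mono (by omega) hh)
  refine le_expect hY fun y hy => ?_
  rw [A.sigma_one_apply (mem_Yfin.1 hy)]
  have hd : m ≤ (A.graph i).dist (A.sigma i h y) y := by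
    by_contra hd
    exact hhm (A.mem_wordBall_of_dist_le hS hconn (mem_Yfin.1 hy) hh hmn hF (by omega))
  exact (hmonoLo (by exact_mod_cast hd)).trans (hctrl _ _).1

lemma abs_avgKernel_mul_sub_le (hconn : (A.graph i).Connected) (hmonoLo : Monotone ρminus)
    (hmonoHi : Monotone ρplus)
    (hctrl : ∀ x y : A.X i, ρminus ((A.graph i).dist x y) ≤ K i x y ∧
      K i x y ≤ ρplus ((A.graph i).dist x y))
    {a c : Γ} {j k : ℕ} (ha : a ∈ wordBall S j) (hc : c ∈ wordBall S k)
    (hF : wordBall S (k + j) ⊆ A.F i) :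
    |A.avgKernel K i (c * a) a - A.avgKernel K i c 1| ≤
      2 * max |ρminus 0| |ρplus k| * ((Nat.card (A.X i) - #(A.Yfin i)) / #(A.Yfin i)) := by
  set f : A.X i → ℝ := fun x => K i (A.sigma i c x) x
  have hca : ∀ y ∈ A.Yfin i, K i (A.sigma i (c * a) y) (A.sigma i a y) = f (A.sigma i a y) :=
    fun y hy => by
      rw [← A.sigma_mul i c (hF (wordBall_mono (by omega) hc)) a
        (hF (wordBall_mono (by omega) ha)) y (mem_Yfin.1 hy)]
  have hc1 : ∀ y ∈ A.Yfin i, K i (A.sigma i c y) (A.sigma i 1 y) = f y := fun y hy => by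
    rw [A.sigma_one_apply (mem_Yfin.1 hy)]
  have hbound := abs_sum_comp_perm_sub_sum_le (A.sigma i a) (A.Yfin i) f
    (B := max |ρminus 0| |ρplus k|) (le_max_of_le_left (abs_nonneg _))
    (fun y hy => by
      rw [← hc1 y hy]
      refine abs_kernel_le_of_dist_le hmonoLo hmonoHi hctrl ?_
      simpa using A.dist_sigma_mul_apply_le hconn (mem_Yfin.1 hy) (j := 0) one_mem_wordBall hc
        ((wordBall_mono (by omega)).trans hF))
    (fun y hy => by
      rw [← hca y hy]
      exact abs_kernel_le_of_dist_le hmonoLo hmonoHi hctrl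
        (A.dist_sigma_mul_apply_le hconn (mem_Yfin.1 hy) ha hc hF))
  rw [avgKernel, avgKernel, expect_congr rfl hca, expect_congr rfl hc1, expect_eq_sum_div_card,
    expect_eq_sum_div_card, ← sub_div, abs_div, Nat.abs_cast, mul_div_assoc']
  exact div_le_div_of_nonneg_right hbound (Nat.cast_nonneg _)

lemma tendsto_avgKernel_mul_sub (hconn : ∀ i, (A.graph i).Connected)
    (hmonoLo : Monotone ρminus) (hmonoHi : Monotone ρplus)
    (hctrl : ∀ i, ∀ x y : A.X i, ρminus ((A.graph i).dist x y) ≤ K i x y ∧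
      K i x y ≤ ρplus ((A.graph i).dist x y))
    {a c : Γ} {j k : ℕ} (ha : a ∈ wordBall S j) (hc : c ∈ wordBall S k) :
    Tendsto (fun i => A.avgKernel K i (c * a) a - A.avgKernel K i c 1) atTop (𝓝 0) := by
  have h := A.tendsto_card_sub_card_Yfin_div.const_mul (2 * max |ρminus 0| |ρplus k|)
  rw [mul_zero] at h
  refine squeeze_zero_norm' ?_ h
  filter_upwards [A.eventually_wordBall_subset (k + j)] with i hF
  exact A.abs_avgKernel_mul_sub_le (hconn i) hmonoLo hmonoHi (hctrl i) ha hc hF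

lemma sum_avgKernel_nonpos {r : ℝ}
    (hcnd : ∀ n : ℕ, ∀ x : Fin n → A.X i, ∀ lam : Fin n → ℝ, (∑ k, lam k) = 0 →
      (∀ k l : Fin n, ((A.graph i).dist (x k) (x l) : ℝ) ≤ r) →
      (∑ k, ∑ l, lam k * lam l * K i (x k) (x l)) ≤ 0)
    {n : ℕ} (a : Fin n → Γ) (lam : Fin n → ℝ) (hlam : ∑ k, lam k = 0)
    (hd : ∀ k l, ∀ y ∈ A.Y i, ((A.graph i).dist (A.sigma i (a k) y) (A.sigma i (a l) y) : ℝ) ≤ r) :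
    ∑ k, ∑ l, lam k * lam l * A.avgKernel K i (a k) (a l) ≤ 0 := by
  simp_rw [avgKernel, mul_expect, ← expect_sum_comm]
  refine (expect_le_expect fun y hy => ?_).trans_eq (expect_const_zero _)
  exact hcnd n (fun k => A.sigma i (a k) y) lam hlam fun k l => hd k l y (mem_Yfin.1 hy)

variable {U : Ultrafilter ℕ}

lemma exists_tendsto_avgKernel (hS : ∀ s ∈ S, s⁻¹ ∈ S)
    (hgen : Subgroup.closure (S : Set Γ) = ⊤) (hconn : ∀ i, (A.graph i).Connected)
    (hmonoLo : Monotone ρminus) (hmonoHi : Monotone ρplus)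
    (hctrl : ∀ i, ∀ x y : A.X i, ρminus ((A.graph i).dist x y) ≤ K i x y ∧
      K i x y ≤ ρplus ((A.graph i).dist x y))
    (hU : (U : Filter ℕ) ≤ atTop) :
    ∃ ψ₀ : Γ → ℝ, ∀ h, Tendsto (fun i => A.avgKernel K i h 1) U (𝓝 (ψ₀ h)) := by
  suffices hL : ∀ h, ∃ L, Tendsto (fun i => A.avgKernel K i h 1) U (𝓝 L) by
    choose ψ₀ hψ₀ using hL
    exact ⟨ψ₀, hψ₀⟩
  intro h
  obtain ⟨n, hn⟩ := exists_mem_wordBall hS hgen h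
  have hev : ∀ᶠ i in U, A.avgKernel K i h 1 ∈ Set.Icc (ρminus 0) (ρplus n) := hU <| by
    filter_upwards [A.eventually_wordBall_subset n, A.eventually_Yfin_nonempty] with i hF hY
    exact A.avgKernel_mem_Icc (hconn i) hmonoLo hmonoHi (hctrl i) hn hF hY
  obtain ⟨L, -, hL⟩ := isCompact_Icc.ultrafilter_le_nhds (U.map _) (le_principal_iff.2 hev)
  exact ⟨L, hL⟩

variable {ψ₀ : Γ → ℝ}

lemma le_of_tendsto_avgKernel_of_notMem_wordBall (hS : ∀ s ∈ S, s⁻¹ ∈ S)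
    (hgen : Subgroup.closure (S : Set Γ) = ⊤) (hconn : ∀ i, (A.graph i).Connected)
    (hmonoLo : Monotone ρminus)
    (hctrl : ∀ i, ∀ x y : A.X i, ρminus ((A.graph i).dist x y) ≤ K i x y ∧
      K i x y ≤ ρplus ((A.graph i).dist x y))
    (hU : (U : Filter ℕ) ≤ atTop) (hψ₀ : ∀ h, Tendsto (fun i => A.avgKernel K i h 1) U (𝓝 (ψ₀ h)))
    {m : ℕ} {h : Γ} (hh : h ∉ wordBall S m) : ρminus m ≤ ψ₀ h := by
  obtain ⟨n, hn⟩ := exists_mem_wordBall hS hgen h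
  refine ge_of_tendsto (hψ₀ h) (hU ?_)
  filter_upwards [A.eventually_wordBall_subset (n + n), A.eventually_Yfin_nonempty] with i hF hY
  exact A.le_avgKernel_of_notMem_wordBall hS (hconn i) hmonoLo (hctrl i) hn hh hF hY

lemma tendsto_avgKernel_inv_inv (hS : ∀ s ∈ S, s⁻¹ ∈ S)
    (hgen : Subgroup.closure (S : Set Γ) = ⊤) (hconn : ∀ i, (A.graph i).Connected)
    (hmonoLo : Monotone ρminus) (hmonoHi : Monotone ρplus)
    (hctrl : ∀ i, ∀ x y : A.X i, ρminus ((A.graph i).dist x y) ≤ K i x y ∧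
      K i x y ≤ ρplus ((A.graph i).dist x y))
    (hU : (U : Filter ℕ) ≤ atTop) (hψ₀ : ∀ h, Tendsto (fun i => A.avgKernel K i h 1) U (𝓝 (ψ₀ h)))
    (a b : Γ) : Tendsto (fun i => A.avgKernel K i a⁻¹ b⁻¹) U (𝓝 (ψ₀ (a⁻¹ * b))) := by
  obtain ⟨j, hj⟩ := exists_mem_wordBall hS hgen b⁻¹
  obtain ⟨k, hk⟩ := exists_mem_wordBall hS hgen (a⁻¹ * b)
  have h := ((A.tendsto_avgKernel_mul_sub hconn hmonoLo hmonoHi hctrl hj hk).mono_left hU).add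
    (hψ₀ (a⁻¹ * b))
  simpa only [mul_inv_cancel_right, sub_add_cancel, zero_add] using h

lemma isCondNegDef_of_tendsto_avgKernel (hS : ∀ s ∈ S, s⁻¹ ∈ S)
    (hgen : Subgroup.closure (S : Set Γ) = ⊤) (hconn : ∀ i, (A.graph i).Connected)
    (hmonoLo : Monotone ρminus) (hmonoHi : Monotone ρplus) {R : ℕ → ℝ}
    (hRlim : Tendsto R atTop atTop)
    (hctrl : ∀ i, ∀ x y : A.X i, ρminus ((A.graph i).dist x y) ≤ K i x y ∧
      K i x y ≤ ρplus ((A.graph i).dist x y))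
    (hcnd : ∀ i, ∀ n : ℕ, ∀ x : Fin n → A.X i, ∀ lam : Fin n → ℝ, (∑ k, lam k) = 0 →
      (∀ k l : Fin n, ((A.graph i).dist (x k) (x l) : ℝ) ≤ R i) →
      (∑ k, ∑ l, lam k * lam l * K i (x k) (x l)) ≤ 0)
    (hU : (U : Filter ℕ) ≤ atTop) (hψ₀ : ∀ h, Tendsto (fun i => A.avgKernel K i h 1) U (𝓝 (ψ₀ h))) :
    IsCondNegDef ψ₀ := by
  intro n g lam hlam
  obtain ⟨N, hN⟩ := exists_forall_mem_wordBall hS hgen g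
  have hlim := tendsto_finsetSum univ fun k _ => tendsto_finsetSum univ fun l _ =>
    (A.tendsto_avgKernel_inv_inv hS hgen hconn hmonoLo hmonoHi hctrl hU hψ₀ (g k) (g l)).const_mul
      (lam k * lam l)
  refine le_of_tendsto hlim (hU ?_)
  filter_upwards [A.eventually_wordBall_subset (N + N + N),
    hRlim.eventually_ge_atTop ((N + N : ℕ) : ℝ)] with i hF hR
  refine A.sum_avgKernel_nonpos (hcnd i) _ lam hlam fun k l y hy => ?_
  have hd := A.dist_sigma_mul_apply_le (hconn i) hy (inv_mem_wordBall hS (hN l))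
    (mul_mem_wordBall (inv_mem_wordBall hS (hN k)) (hN l)) hF
  rw [mul_inv_cancel_right] at hd
  exact (Nat.cast_le.2 hd).trans hR

end SoficApprox

open SoficApprox in
theorem aTmenable_of_asymptotic_embedding_general
    {Γ : Type u} [Group Γ] {S : Finset Γ}
    (hSsymm : ∀ s ∈ S, s⁻¹ ∈ S)
    (hSgen : Subgroup.closure (S : Set Γ) = ⊤)
    (A : SoficApprox Γ S)
    (hconn : ∀ i, (A.graph i).Connected)
    (ρminus ρplus : ℝ → ℝ)
    (hmonoLo : Monotone ρminus) (hmonoHi : Monotone ρplus)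
    (hproper : Filter.Tendsto ρminus Filter.atTop Filter.atTop)
    (R : ℕ → ℝ)
    (hRlim : Filter.Tendsto R Filter.atTop Filter.atTop)
    (K : (i : ℕ) → A.X i → A.X i → ℝ)
    (hdiag : ∀ i, ∀ x : A.X i, K i x x = 0)
    (hctrl : ∀ i, ∀ x y : A.X i,
      ρminus (((A.graph i).dist x y : ℝ)) ≤ K i x y ∧
      K i x y ≤ ρplus (((A.graph i).dist x y : ℝ)))
    (hcnd : ∀ i, ∀ n : ℕ, ∀ x : Fin n → A.X i, ∀ lam : Fin n → ℝ,
      (∑ k, lam k) = 0 →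
      (∀ k l : Fin n, ((A.graph i).dist (x k) (x l) : ℝ) ≤ R i) →
      (∑ k, ∑ l, lam k * lam l * K i (x k) (x l)) ≤ 0) :
    ∃ ψ : Γ → ℝ,
      ψ 1 = 0 ∧
      (∀ g : Γ, ψ g = ψ g⁻¹) ∧
      (∀ n : ℕ, ∀ g : Fin n → Γ, ∀ lam : Fin n → ℝ,
        (∑ k, lam k) = 0 →
        (∑ k, ∑ l, lam k * lam l * ψ ((g k)⁻¹ * g l)) ≤ 0) ∧
      (∀ C : ℝ, {g : Γ | ψ g ≤ C}.Finite) := by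
  have hU := Ultrafilter.of_le (atTop : Filter ℕ)
  obtain ⟨ψ₀, hψ₀⟩ := A.exists_tendsto_avgKernel hSsymm hSgen hconn hmonoLo hmonoHi hctrl hU
  have hψ₀_one : ψ₀ 1 = 0 :=
    tendsto_nhds_unique (hψ₀ 1) (by simp [A.avgKernel_one_one, hdiag])
  refine ⟨fun g => ψ₀ g + ψ₀ g⁻¹, by simp [hψ₀_one],
    fun g => by beta_reduce; rw [inv_inv, add_comm],
    (A.isCondNegDef_of_tendsto_avgKernel hSsymm hSgen hconn hmonoLo hmonoHi hRlim hctrl hcnd hU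
      hψ₀).add_comp_inv, ?_⟩
  have hlower (m : ℕ) : ∀ g ∉ wordBall S m, ρminus m ≤ ψ₀ g :=
    fun g => A.le_of_tendsto_avgKernel_of_notMem_wordBall hSsymm hSgen hconn hmonoLo hctrl hU hψ₀
  have hρ : Tendsto (fun m : ℕ => ρminus m) atTop atTop :=
    hproper.comp tendsto_natCast_atTop_atTop
  exact finite_setOf_le_of_forall_notMem_wordBall (hρ.atTop_add_atTop hρ) fun m g hg =>
    add_le_add (hlower m g hg)
      (hlower m g⁻¹ fun hg' => hg (inv_inv g ▸ inv_mem_wordBall hSsymm hg'))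

open SoficApprox in
/-- **Asymptotic coarse embeddability of a sofic approximation implies a-T-menability.**
If the graphs of a sofic approximation of `Γ` admit symmetric normalised kernels `K i`,
controlled above and below by fixed nondecreasing proper functions `ρ₋ ≤ ρ₊`, which are
conditionally negative definite on all subsets of diameter at most `R i` with `R i → ∞`,
then `Γ` admits a proper conditionally negative definite function, i.e. is a-T-menable. -/
theorem aTmenable_of_asymptotic_embedding
    {Γ : Type u} [Group Γ] {S : Finset Γ}
    (hSsymm : ∀ s ∈ S, s⁻¹ ∈ S)
    (hSgen : Subgroup.closure (S : Set Γ) = ⊤)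
    (A : SoficApprox Γ S)
    (hconn : ∀ i, (A.graph i).Connected)
    (ρminus ρplus : ℝ → ℝ)
    (hmonoLo : Monotone ρminus) (hmonoHi : Monotone ρplus)
    (hproper : Filter.Tendsto ρminus Filter.atTop Filter.atTop)
    (R : ℕ → ℝ) (hRpos : ∀ i, 0 ≤ R i)
    (hRlim : Filter.Tendsto R Filter.atTop Filter.atTop)
    (K : (i : ℕ) → A.X i → A.X i → ℝ)
    (hdiag : ∀ i, ∀ x : A.X i, K i x x = 0)
    (hsymm : ∀ i, ∀ x y : A.X i, K i x y = K i y x)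
    (hctrl : ∀ i, ∀ x y : A.X i,
      ρminus (((A.graph i).dist x y : ℝ)) ≤ K i x y ∧
      K i x y ≤ ρplus (((A.graph i).dist x y : ℝ)))
    (hcnd : ∀ i, ∀ n : ℕ, ∀ x : Fin n → A.X i, ∀ lam : Fin n → ℝ,
      (∑ k, lam k) = 0 →
      (∀ k l : Fin n, ((A.graph i).dist (x k) (x l) : ℝ) ≤ R i) →
      (∑ k, ∑ l, lam k * lam l * K i (x k) (x l)) ≤ 0) :
    ∃ ψ : Γ → ℝ,
      ψ 1 = 0 ∧
      (∀ g : Γ, ψ g = ψ g⁻¹) ∧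
      (∀ n : ℕ, ∀ g : Fin n → Γ, ∀ lam : Fin n → ℝ,
        (∑ k, lam k) = 0 →
        (∑ k, ∑ l, lam k * lam l * ψ ((g k)⁻¹ * g l)) ≤ 0) ∧
      (∀ C : ℝ, {g : Γ | ψ g ≤ C}.Finite) :=
  aTmenable_of_asymptotic_embedding_general hSsymm hSgen A hconn ρminus ρplus hmonoLo hmonoHi
    hproper R hRlim K hdiag hctrl hcnd
end

section
/- Let Γ be a group generated by a finite symmetric set S, and let N_1 ⊇ N_2 ⊇ ⋯ be a nested sequence of finite-index normal subgroups of Γ with ⋂_i N_i = {1}. Let X = ⨆_i Γ/N_i (disjoint union of the coset spaces), and for g ∈ Γ let ρ(g) : X → X be the bijection sending the coset xN_i to xgN_i. Then for every free (non-principal) ultrafilter η on X and all g ≠ h in Γ, one has Ultrafilter.map (ρ(g)) η ≠ Ultrafilter.map (ρ(h)) η; in particular, the induced action of Γ on the set of free ultrafilters on X is free. -/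
/-!
If `ρ(g)η = ρ(h)η`, push both ultrafilters forward along a colouring `c : X → Fin 3` with
`c (ρ g p) ≠ c (ρ h p)` for η-almost all `p`: a finite colouring is η-almost surely constant,
a contradiction. On each level `Γ/N i` with `gN i ≠ hN i`, right multiplication by `g⁻¹h` has
no fixed points and its orbits are the cosets of `⟨g⁻¹h⟩`, i.e. cycles of length at least two
(or bi-infinite lines), which are 3-colourable. Since `η` is free and `⋂ N i = 1`, these levels
carry full η-measure.
-/

open Filter

theorem exists_zmod_orderOf_mul_right_eq_add_one {G : Type*} [Group G] (a : G) :
    ∃ φ : G → ZMod (orderOf a), ∀ x, φ (x * a) = φ x + 1 := by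
  -- `φ x` is the exponent of `x` over a fixed representative of its coset `x⟨a⟩`.
  set r : G → G := fun x => (QuotientGroup.mk x : G ⧸ Subgroup.zpowers a).out
  have hrep : ∀ x, ∃ k : ℤ, x = r x * a ^ k := fun x => by
    obtain ⟨k, hk⟩ := Subgroup.mem_zpowers_iff.mp <| QuotientGroup.eq.mp <|
      QuotientGroup.out_eq' (QuotientGroup.mk x : G ⧸ Subgroup.zpowers a)
    exact ⟨k, by rw [hk, mul_inv_cancel_left]⟩
  choose k hk using hrep
  refine ⟨fun x => k x, fun x => ?_⟩
  have hr : r (x * a) = r x := by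
    simp only [r, QuotientGroup.eq.mpr (by simp : x⁻¹ * (x * a) ∈ Subgroup.zpowers a)]
  have hpow : a ^ k (x * a) = a ^ (k x + 1) := by
    refine mul_left_cancel (a := r x) ((hr ▸ hk (x * a)).symm.trans ?_)
    rw [zpow_add_one, ← mul_assoc, ← hk x]
  rw [← Int.cast_one, ← Int.cast_add, ZMod.intCast_eq_intCast_iff]
  exact zpow_eq_zpow_iff_modEq.mp hpow

theorem ZMod.exists_fin_three_coloring_add_one {n : ℕ} (hn : n ≠ 1) :
    ∃ c : ZMod n → Fin 3, ∀ t, c (t + 1) ≠ c t := by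
  match n, hn with
  | 0, _ =>
    refine ⟨fun t : ℤ => if Even t then 0 else 1, fun t : ℤ => ?_⟩
    show (if Even (t + 1) then (0 : Fin 3) else 1) ≠ if Even t then 0 else 1
    by_cases ht : Even t <;> simp [ht]
  | n + 2, _ =>
    refine ⟨fun t => if t.val = n + 1 then 2 else if t.val % 2 = 0 then 0 else 1, fun t => ?_⟩
    have hsucc : (t + 1).val = if t.val = n + 1 then 0 else t.val + 1 := by
      rw [ZMod.val_add, ZMod.val_one'' (by omega)]
      split_ifs with h
      · simp [h]
      · exact Nat.mod_eq_of_lt (by have := t.val_lt; omega)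
    by_cases hlast : t.val = n + 1
    · simp [hsucc, hlast]
    · simp only [hsucc, hlast, if_false]
      split_ifs <;> first | decide | omega

theorem exists_fin_three_coloring_mul_right {G : Type*} [Group G] {a : G} (ha : a ≠ 1) :
    ∃ c : G → Fin 3, ∀ x, c (x * a) ≠ c x := by
  obtain ⟨φ, hφ⟩ := exists_zmod_orderOf_mul_right_eq_add_one a
  obtain ⟨c, hc⟩ := ZMod.exists_fin_three_coloring_add_one (mt orderOf_eq_one_iff.mp ha)
  exact ⟨c ∘ φ, fun x => by simpa only [Function.comp_apply, hφ] using hc (φ x)⟩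

theorem exists_fin_three_coloring_mul_right_ne {G : Type*} [Group G] {a b : G} (hab : a ≠ b) :
    ∃ c : G → Fin 3, ∀ x, c (x * a) ≠ c (x * b) := by
  obtain ⟨c, hc⟩ := exists_fin_three_coloring_mul_right (mt inv_mul_eq_one.mp hab)
  exact ⟨c, fun x => by simpa only [mul_inv_cancel_left, mul_assoc] using (hc (x * a)).symm⟩

namespace Ultrafilter

variable {X Y κ : Type*} {η : Ultrafilter X}

theorem eventuallyEq_of_map_eq [Finite κ] {F G : X → κ} (h : η.map F = η.map G) :
    F =ᶠ[η] G := by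
  obtain ⟨j, hj⟩ := (η.map F).eq_pure_of_finite
  have hF : F ⁻¹' {j} ∈ η := by rw [← mem_map, hj, mem_pure]; rfl
  have hG : G ⁻¹' {j} ∈ η := by rw [← mem_map, ← h, hj, mem_pure]; rfl
  filter_upwards [hF, hG] with x hFx hGx using hFx.trans hGx.symm

theorem map_ne_map_of_coloring [Finite κ] {f g : X → Y} (c : Y → κ)
    (hc : ∀ᶠ x in η, c (f x) ≠ c (g x)) : η.map f ≠ η.map g := fun h =>
  have hcol : η.map (c ∘ f) = η.map (c ∘ g) := by rw [← map_map, h, map_map]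
  ((eventuallyEq_of_map_eq hcol).and hc).exists.elim fun _ hx => hx.2 hx.1

theorem map_sigmaCongrRight_mulRight_ne {ι : Type*} {G : ι → Type*}
    [∀ i, Group (G i)] {η : Ultrafilter (Σ i, G i)} {a b : ∀ i, G i}
    (hab : ∀ᶠ p : Σ i, G i in η, a p.1 ≠ b p.1) :
    η.map (Equiv.sigmaCongrRight fun i => Equiv.mulRight (a i)) ≠
      η.map (Equiv.sigmaCongrRight fun i => Equiv.mulRight (b i)) := by
  have hcol : ∀ i, ∃ c : G i → Fin 3, a i ≠ b i → ∀ x, c (x * a i) ≠ c (x * b i) := fun i => by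
    by_cases hi : a i = b i
    · exact ⟨0, fun h => (h hi).elim⟩
    · exact (exists_fin_three_coloring_mul_right_ne hi).imp fun _ hc _ => hc
  choose c hc using hcol
  exact map_ne_map_of_coloring (fun p => c p.1 p.2) (hab.mono fun p hp => hc p.1 hp p.2)

end Ultrafilter

theorem tendsto_sigma_fst_cofinite {ι : Type*} {β : ι → Type*} [∀ i, Finite (β i)] :
    Tendsto (Sigma.fst : (Σ i, β i) → ι) cofinite cofinite :=
  Tendsto.cofinite_of_finite_preimage_singleton fun i => by
    rw [← Set.range_sigmaMk]
    infer_instance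

theorem box_space_boundary_action_free_general
    {Γ : Type*} [Group Γ]
    (N : ℕ → Subgroup Γ)
    (hnormal : ∀ i, (N i).Normal)
    (hfinite : ∀ i, (N i).FiniteIndex)
    (hnested : ∀ i, N (i + 1) ≤ N i)
    (htrivial : ∀ g : Γ, g ≠ 1 → ∃ i, g ∉ N i) :
    ∀ η : Ultrafilter ((i : ℕ) × (Γ ⧸ N i)),
      (∀ p : (i : ℕ) × (Γ ⧸ N i), η ≠ pure p) →
      ∀ g h : Γ, g ≠ h →
        Ultrafilter.map
            (Equiv.sigmaCongrRight
              (fun i => Equiv.mulRight (QuotientGroup.mk g : Γ ⧸ N i))) η ≠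
        Ultrafilter.map
            (Equiv.sigmaCongrRight
              (fun i => Equiv.mulRight (QuotientGroup.mk h : Γ ⧸ N i))) η := by
  intro η hfree g h hgh
  refine Ultrafilter.map_sigmaCongrRight_mulRight_ne ?_
  have hcofinite : (η : Filter ((i : ℕ) × (Γ ⧸ N i))) ≤ cofinite :=
    η.le_cofinite_or_eq_pure.resolve_right fun ⟨p, hp⟩ => hfree p hp
  have hsep : ∀ᶠ i in atTop, (QuotientGroup.mk g : Γ ⧸ N i) ≠ QuotientGroup.mk h := by
    obtain ⟨i₀, hi₀⟩ := htrivial (g⁻¹ * h) (mt inv_mul_eq_one.mp hgh)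
    filter_upwards [eventually_ge_atTop i₀] with i hi heq
    exact hi₀ (antitone_nat_of_succ_le hnested hi (QuotientGroup.eq.mp heq))
  exact hcofinite (tendsto_sigma_fst_cofinite.trans_eq Nat.cofinite_eq_atTop hsep)

/-- **Freeness at the boundary for box spaces of residually finite groups.**
Let `Γ` be generated by a finite symmetric set `S`, and `N 0 ⊇ N 1 ⊇ ⋯` a nested chain of
finite-index normal subgroups with trivial intersection. On `X = ⨆ i, Γ/N i` let `ρ(g)` be
the bijection `xN i ↦ xgN i`. Then for every free ultrafilter `η` on `X` and all `g ≠ h`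
in `Γ`, `map (ρ g) η ≠ map (ρ h) η`: the induced `Γ`-action on the set of free
ultrafilters is free. -/
theorem box_space_boundary_action_free
    {Γ : Type*} [Group Γ] (S : Finset Γ)
    (hSsymm : ∀ s ∈ S, s⁻¹ ∈ S)
    (hSgen : Subgroup.closure (S : Set Γ) = ⊤)
    (N : ℕ → Subgroup Γ)
    (hnormal : ∀ i, (N i).Normal)
    (hfinite : ∀ i, (N i).FiniteIndex)
    (hnested : ∀ i, N (i + 1) ≤ N i)
    (htrivial : ∀ g : Γ, g ≠ 1 → ∃ i, g ∉ N i) :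
    ∀ η : Ultrafilter ((i : ℕ) × (Γ ⧸ N i)),
      (∀ p : (i : ℕ) × (Γ ⧸ N i), η ≠ pure p) →
      ∀ g h : Γ, g ≠ h →
        Ultrafilter.map
            (Equiv.sigmaCongrRight
              (fun i => Equiv.mulRight (QuotientGroup.mk g : Γ ⧸ N i))) η ≠
        Ultrafilter.map
            (Equiv.sigmaCongrRight
              (fun i => Equiv.mulRight (QuotientGroup.mk h : Γ ⧸ N i))) η :=
  box_space_boundary_action_free_general N hnormal hfinite hnested htrivial
end
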